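/- For every n×n density matrix ρ, the subentropy is at most the von Neumann entropy: Q(ρ) ≤ S(ρ). -/

import Mathlib

/-!
Since `η` is subadditive on `[0, ∞)` and `η(ab) = b η(a) + a η(b)`, pointwise on the simplex
`η(λ·x) ≤ ∑ᵢ (xᵢ η(λᵢ) + λᵢ η(xᵢ))`. Each coordinate `xᵢ` of a uniform point of `Δ_n` has
density `(n - 1)(1 - t)^(n - 2)`, so `n ∫ xᵢ dx = 1` and `n ∫ η(xᵢ) dx = C_n`. Integrating,
the bound becomes `S(λ) + (∑ᵢ λᵢ) C_n - C_n = S(λ)`.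
-/

open MeasureTheory Matrix
open scoped ComplexOrder

/-- η(y) = −y ln y (with ln 0 = 0 in Mathlib, so 0 ln 0 = 0). -/
noncomputable def eta (y : ℝ) : ℝ := -(y * Real.log y)

/-- C_n = 1/2 + 1/3 + ⋯ + 1/n (C_1 = 0). -/
noncomputable def harmC (n : ℕ) : ℝ := ∑ k ∈ Finset.Icc 2 n, (1 : ℝ) / k

/-- Integral of a function over the probability simplex Δ_n with respect to the
normalized uniform measure dx = (n−1)! dx_1 ⋯ dx_{n−1}, realised in the coordinates
(x_1, …, x_{n−1}), with x_n = 1 − (x_1 + ⋯ + x_{n−1}). -/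
noncomputable def simplexIntegral (n : ℕ) (f : (Fin n → ℝ) → ℝ) : ℝ :=
  ((n - 1).factorial : ℝ) *
    ∫ y in {y : Fin (n - 1) → ℝ | (∀ i, 0 ≤ y i) ∧ ∑ i, y i ≤ 1},
      f (fun i => if h : (i : ℕ) < n - 1 then y ⟨(i : ℕ), h⟩ else 1 - ∑ j, y j)

/-- Subentropy of a probability vector: F(λ) = n ∫_{Δ_n} η(λ·x) dx − C_n. -/
noncomputable def subF (n : ℕ) (lam : Fin n → ℝ) : ℝ :=
  (n : ℝ) * simplexIntegral n (fun x => eta (∑ i, lam i * x i)) - harmC n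

/-- Subentropy of a (Hermitian) matrix: Q(ρ) = F(λ(ρ)), the subentropy of its
eigenvalue vector (junk value 0 for non-Hermitian matrices). -/
noncomputable def Qmat {ι : Type} [Fintype ι] [DecidableEq ι] (ρ : Matrix ι ι ℂ) : ℝ :=
  if h : ρ.IsHermitian then
    subF (Fintype.card ι) (fun k => h.eigenvalues ((Fintype.equivFin ι).symm k))
  else 0

open Real

lemma eta_eq_negMulLog : eta = negMulLog := by
  funext x; simp only [eta, negMulLog, neg_mul]

lemma negMulLog_add_le {a b : ℝ} (ha : 0 ≤ a) (hb : 0 ≤ b) :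
    negMulLog (a + b) ≤ negMulLog a + negMulLog b := by
  rcases ha.eq_or_lt with rfl | ha
  · simp
  rcases hb.eq_or_lt with rfl | hb
  · simp
  have hla : log a ≤ log (a + b) := log_le_log ha (by linarith)
  have hlb : log b ≤ log (a + b) := log_le_log hb (by linarith)
  simp only [negMulLog, neg_mul, add_mul]
  nlinarith [mul_le_mul_of_nonneg_left hla ha.le, mul_le_mul_of_nonneg_left hlb hb.le]

lemma negMulLog_sum_le {ι : Type*} (s : Finset ι) {a : ι → ℝ} (ha : ∀ i ∈ s, 0 ≤ a i) :
    negMulLog (∑ i ∈ s, a i) ≤ ∑ i ∈ s, negMulLog (a i) := by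
  induction s using Finset.cons_induction with
  | empty => simp
  | cons i s his ih =>
    rw [Finset.forall_mem_cons] at ha
    rw [Finset.sum_cons, Finset.sum_cons]
    exact (negMulLog_add_le ha.1 (Finset.sum_nonneg ha.2)).trans (add_le_add le_rfl (ih ha.2))

section IntervalIntegrals

open intervalIntegral

lemma integral_one_sub_pow (k : ℕ) : ∫ t in (0 : ℝ)..1, (1 - t) ^ k = 1 / (k + 1) := by
  simp [integral_comp_sub_left (fun t => t ^ k)]

lemma integral_mul_one_sub_pow (k : ℕ) :
    ∫ t in (0 : ℝ)..1, t * (1 - t) ^ k = 1 / (k + 1) - 1 / (k + 2) := by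
  have h : ∀ t : ℝ, t * (1 - t) ^ k = (1 - t) ^ k - (1 - t) ^ (k + 1) := fun t => by ring
  simp_rw [h]
  have hint : ∀ j : ℕ, IntervalIntegrable (fun t : ℝ => (1 - t) ^ j) volume 0 1 := fun j =>
    (by fun_prop : Continuous fun t : ℝ => (1 - t) ^ j).intervalIntegrable _ _
  rw [integral_sub (hint k) (hint (k + 1)), integral_one_sub_pow, integral_one_sub_pow]
  push_cast; ring

lemma one_sub_one_sub_pow (k : ℕ) (t : ℝ) :
    1 - (1 - t) ^ k = t * ∑ i ∈ Finset.range k, (1 - t) ^ i := by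
  linear_combination (geom_sum_mul (1 - t) k)

lemma hasDerivAt_one_sub_pow_div (j : ℕ) (t : ℝ) :
    HasDerivAt (fun t : ℝ => (1 - t) ^ (j + 1) / (j + 1)) (-(1 - t) ^ j) t := by
  refine ((((hasDerivAt_id t).const_sub 1).pow (j + 1)).div_const ((j : ℝ) + 1)).congr_deriv ?_
  simp only [id, Nat.add_sub_cancel, Nat.cast_succ]
  field_simp

lemma integral_neg_log_mul_one_sub_pow (k : ℕ) :
    ∫ t in (0 : ℝ)..1, -log t * (1 - t) ^ k = harmonic (k + 1) / (k + 1) := by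
  set Q : ℝ → ℝ := fun t => ∑ i ∈ Finset.range (k + 1), (1 - t) ^ i
  set R : ℝ → ℝ := fun t => ∑ i ∈ Finset.range (k + 1), (1 - t) ^ (i + 1) / (i + 1)
  set G : ℝ → ℝ := fun t => -(log t * (1 - (1 - t) ^ (k + 1)) + R t) / (k + 1)
  have hG_cont : ContinuousOn G (Set.Icc 0 1) := by
    -- `log t * (1 - (1 - t) ^ (k + 1)) = (t * log t) * Q t` removes the singularity at `0`
    have hG : G = fun t => -(t * log t * Q t + R t) / (k + 1) := by
      funext t
      simp only [G, Q, one_sub_one_sub_pow]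
      ring
    rw [hG]
    fun_prop
  have hG_deriv : ∀ t ∈ Set.Ioo (0 : ℝ) 1, HasDerivAt G (-log t * (1 - t) ^ k) t := by
    intro t ht
    have hP : HasDerivAt (fun t : ℝ => 1 - (1 - t) ^ (k + 1)) ((k + 1) * (1 - t) ^ k) t := by
      refine ((((hasDerivAt_id t).const_sub 1).pow (k + 1)).const_sub 1).congr_deriv ?_
      simp only [id, Nat.add_sub_cancel, Nat.cast_succ]
      ring
    have hR : HasDerivAt R (-Q t) t := by
      simp only [R, Q, ← Finset.sum_neg_distrib]
      exact HasDerivAt.fun_sum fun j _ => hasDerivAt_one_sub_pow_div j t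
    refine ((((hasDerivAt_log ht.1.ne').mul hP).add hR).neg.div_const _).congr_deriv ?_
    have ht0 : t ≠ 0 := ht.1.ne'
    simp only [Q, one_sub_one_sub_pow]
    field_simp
    ring
  rw [integral_eq_sub_of_hasDerivAt_of_le zero_le_one hG_cont hG_deriv
    (intervalIntegrable_log'.neg.mul_continuousOn (by fun_prop))]
  simp [G, R, harmonic, neg_div]

lemma integral_negMulLog_mul_one_sub_pow (k : ℕ) :
    ∫ t in (0 : ℝ)..1, negMulLog t * (1 - t) ^ k
      = harmonic (k + 1) / (k + 1) - harmonic (k + 2) / (k + 2) := by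
  have h : ∀ t : ℝ, negMulLog t * (1 - t) ^ k
      = -log t * (1 - t) ^ k - -log t * (1 - t) ^ (k + 1) := fun t => by
    rw [negMulLog]; ring
  have hint : ∀ j : ℕ, IntervalIntegrable (fun t => -log t * (1 - t) ^ j) volume 0 1 := fun j =>
    intervalIntegrable_log'.neg.mul_continuousOn (by fun_prop : Continuous _).continuousOn
  simp_rw [h]
  rw [integral_sub (hint k) (hint (k + 1)), integral_neg_log_mul_one_sub_pow,
    integral_neg_log_mul_one_sub_pow]
  push_cast; ring

end IntervalIntegrals

lemma setIntegral_prod_eq_integral_setIntegral_slice {α β : Type*} [MeasurableSpace α]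
    [MeasurableSpace β] {μ : Measure α} {ν : Measure β} [SFinite μ] [SFinite ν]
    {s : Set (α × β)} (hs : MeasurableSet s) {F : α × β → ℝ}
    (hF : IntegrableOn F s (μ.prod ν)) :
    ∫ p in s, F p ∂μ.prod ν = ∫ x, ∫ y in Prod.mk x ⁻¹' s, F (x, y) ∂ν ∂μ := by
  rw [← integral_indicator hs, integral_prod _ (hF.integrable_indicator hs)]
  congr 1 with x
  rw [← integral_indicator (measurable_prodMk_left hs)]
  rfl

lemma setIntegral_prod_eq_integral_setIntegral_slice_symm {α β : Type*} [MeasurableSpace α]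
    [MeasurableSpace β] {μ : Measure α} {ν : Measure β} [SFinite μ] [SFinite ν]
    {s : Set (α × β)} (hs : MeasurableSet s) {F : α × β → ℝ}
    (hF : IntegrableOn F s (μ.prod ν)) :
    ∫ p in s, F p ∂μ.prod ν = ∫ y, ∫ x in (fun x => (x, y)) ⁻¹' s, F (x, y) ∂μ ∂ν := by
  rw [← integral_indicator hs, integral_prod_symm _ (hF.integrable_indicator hs)]
  congr 1 with y
  rw [← integral_indicator (measurable_prodMk_right hs)]
  rfl

section SolidSimplex

variable (m : ℕ) (r : ℝ)

def solidSimplex : Set (Fin m → ℝ) := {y | (∀ i, 0 ≤ y i) ∧ ∑ i, y i ≤ r}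

def solidSimplexSplit : Set (ℝ × (Fin m → ℝ)) :=
  {p | 0 ≤ p.1 ∧ p.2 ∈ solidSimplex m (r - p.1)}

lemma isCompact_solidSimplex : IsCompact (solidSimplex m r) := by
  have hclosed : IsClosed (solidSimplex m r) := by
    simp only [solidSimplex, Set.ofPred_and, Set.ofPred_forall]
    exact (isClosed_iInter fun i => isClosed_le continuous_const (continuous_apply i)).inter
      (isClosed_le (by fun_prop) continuous_const)
  refine (isCompact_Icc (a := 0) (b := fun _ => r)).of_isClosed_subset hclosed ?_
  rintro y ⟨hy, hsum⟩
  exact ⟨hy, fun i => (Finset.single_le_sum (fun j _ => hy j) (Finset.mem_univ i)).trans hsum⟩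

lemma measurableSet_solidSimplex : MeasurableSet (solidSimplex m r) :=
  (isCompact_solidSimplex m r).isClosed.measurableSet

variable {m r}

lemma solidSimplex_eq_empty (hr : r < 0) : solidSimplex m r = ∅ :=
  Set.eq_empty_of_forall_notMem fun _ ⟨hy, hsum⟩ =>
    (Finset.sum_nonneg fun i _ => hy i).not_gt (hsum.trans_lt hr)

variable (m r)

lemma solidSimplex_succ_eq_preimage (i : Fin (m + 1)) :
    solidSimplex (m + 1) r
      = MeasurableEquiv.piFinSuccAbove (fun _ => ℝ) i ⁻¹' solidSimplexSplit m r := by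
  ext y
  simp only [solidSimplex, solidSimplexSplit, Set.mem_ofPred_eq, Set.mem_preimage,
    MeasurableEquiv.piFinSuccAbove_apply, Fin.insertNthEquiv_symm_apply,
    Fin.sum_univ_succAbove y i, Fin.forall_iff_succAbove i, Fin.removeNth]
  constructor
  · rintro ⟨⟨h0, hs⟩, hsum⟩; exact ⟨h0, hs, by linarith⟩
  · rintro ⟨h0, hs, hsum⟩; exact ⟨⟨h0, hs⟩, by linarith⟩

lemma isCompact_solidSimplexSplit : IsCompact (solidSimplexSplit m r) := by
  have hcont : Continuous (MeasurableEquiv.piFinSuccAbove (fun _ => ℝ) (0 : Fin (m + 1))) := by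
    change Continuous fun y : Fin (m + 1) → ℝ => (y 0, fun j => y (Fin.succAbove 0 j))
    fun_prop
  have h := (isCompact_solidSimplex (m + 1) r).image hcont
  rwa [solidSimplex_succ_eq_preimage m r 0,
    Set.image_preimage_eq _ (MeasurableEquiv.surjective _)] at h

lemma setIntegral_solidSimplex_succ (i : Fin (m + 1)) (F : ℝ × (Fin m → ℝ) → ℝ) :
    ∫ y in solidSimplex (m + 1) r, F (y i, fun k => y (i.succAbove k))
      = ∫ p in solidSimplexSplit m r, F p := by
  rw [solidSimplex_succ_eq_preimage m r i, ← (volume_preserving_piFinSuccAbove (fun _ => ℝ) i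
    ).setIntegral_preimage_emb (MeasurableEquiv.measurableEmbedding _)]
  rfl

variable {m r}

lemma setIntegral_solidSimplexSplit_eq_intervalIntegral (hr : 0 ≤ r)
    {F : ℝ × (Fin m → ℝ) → ℝ} (hF : Continuous F) :
    ∫ p in solidSimplexSplit m r, F p
      = ∫ t in (0 : ℝ)..r, ∫ z in solidSimplex m (r - t), F (t, z) := by
  have hcomp := isCompact_solidSimplexSplit m r
  rw [Measure.volume_eq_prod, setIntegral_prod_eq_integral_setIntegral_slice
    hcomp.isClosed.measurableSet (hF.continuousOn.integrableOn_compact hcomp),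
    intervalIntegral.integral_of_le hr, ← integral_Icc_eq_integral_Ioc,
    ← integral_indicator measurableSet_Icc]
  congr 1 with t
  by_cases ht : t ∈ Set.Icc 0 r
  · have hslice : Prod.mk t ⁻¹' solidSimplexSplit m r = solidSimplex m (r - t) := by
      ext z; simp [solidSimplexSplit, ht.1]
    rw [Set.indicator_of_mem ht, hslice]
  · have hslice : Prod.mk t ⁻¹' solidSimplexSplit m r = ∅ := by
      refine Set.eq_empty_of_forall_notMem fun z ⟨ht0, hz⟩ => ?_
      rw [solidSimplex_eq_empty (by grind)] at hz
      exact hz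
    rw [Set.indicator_of_notMem ht, hslice, Measure.restrict_empty, integral_zero_measure]

lemma setIntegral_solidSimplexSplit_eq_setIntegral_intervalIntegral
    {F : ℝ × (Fin m → ℝ) → ℝ} (hF : Continuous F) :
    ∫ p in solidSimplexSplit m r, F p
      = ∫ z in solidSimplex m r, ∫ t in (0 : ℝ)..(r - ∑ i, z i), F (t, z) := by
  have hcomp := isCompact_solidSimplexSplit m r
  rw [Measure.volume_eq_prod, setIntegral_prod_eq_integral_setIntegral_slice_symm
    hcomp.isClosed.measurableSet (hF.continuousOn.integrableOn_compact hcomp),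
    ← integral_indicator (measurableSet_solidSimplex m r)]
  congr 1 with z
  by_cases hz : z ∈ solidSimplex m r
  · have hslice :
        (fun t => (t, z)) ⁻¹' solidSimplexSplit m r = Set.Icc 0 (r - ∑ i, z i) := by
      ext t; simp only [solidSimplexSplit, solidSimplex, Set.mem_preimage, Set.mem_ofPred_eq,
        Set.mem_Icc]
      constructor
      · rintro ⟨ht, -, hsum⟩; exact ⟨ht, by linarith⟩
      · rintro ⟨ht, hsum⟩; exact ⟨ht, hz.1, by linarith⟩
    rw [Set.indicator_of_mem hz, hslice, integral_Icc_eq_integral_Ioc,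
      ← intervalIntegral.integral_of_le (by linarith [hz.2])]
  · have hslice : (fun t => (t, z)) ⁻¹' solidSimplexSplit m r = ∅ := by
      refine Set.eq_empty_of_forall_notMem fun t ⟨ht0, hz'⟩ => hz ⟨hz'.1, ?_⟩
      linarith [hz'.2]
    rw [Set.indicator_of_notMem hz, hslice, Measure.restrict_empty, integral_zero_measure]

lemma measureReal_solidSimplex (hr : 0 ≤ r) :
    volume.real (solidSimplex m r) = r ^ m / m.factorial := by
  induction m generalizing r with
  | zero =>
    have huniv : solidSimplex 0 r = Set.univ := by ext y; simp [solidSimplex, hr]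
    simp [huniv, measureReal_def, volume_pi]
  | succ m ih =>
    have h := setIntegral_solidSimplex_succ m r 0 fun _ => (1 : ℝ)
    rw [setIntegral_solidSimplexSplit_eq_intervalIntegral hr continuous_const] at h
    simp only [setIntegral_const, smul_eq_mul, mul_one] at h
    rw [h, intervalIntegral.integral_congr (g := fun t => (r - t) ^ m / m.factorial)
      fun t ht => ih (by linarith [(Set.uIcc_of_le hr ▸ ht).2])]
    simp [intervalIntegral.integral_comp_sub_left (fun t => t ^ m / m.factorial),
      Nat.factorial_succ]
    field_simp

lemma setIntegral_solidSimplex_comp_apply (hr : 0 ≤ r) (i : Fin (m + 1)) {f : ℝ → ℝ}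
    (hf : Continuous f) :
    ∫ y in solidSimplex (m + 1) r, f (y i)
      = ∫ t in (0 : ℝ)..r, f t * ((r - t) ^ m / m.factorial) := by
  rw [setIntegral_solidSimplex_succ m r i fun p => f p.1,
    setIntegral_solidSimplexSplit_eq_intervalIntegral hr (by fun_prop)]
  refine intervalIntegral.integral_congr fun t ht => ?_
  dsimp only
  rw [setIntegral_const, measureReal_solidSimplex (by linarith [(Set.uIcc_of_le hr ▸ ht).2]),
    smul_eq_mul, mul_comm]

lemma setIntegral_solidSimplex_comp_sub_sum {f : ℝ → ℝ} (hf : Continuous f) :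
    ∫ y in solidSimplex (m + 1) r, f (r - ∑ i, y i)
      = ∫ y in solidSimplex (m + 1) r, f (y 0) := by
  have hsplit : ∀ y : Fin (m + 1) → ℝ, f (r - ∑ i, y i)
      = f (r - ∑ k, y (Fin.succAbove 0 k) - y 0) := fun y => by
    rw [Fin.sum_univ_succAbove y 0]; ring_nf
  simp_rw [hsplit]
  rw [setIntegral_solidSimplex_succ m r 0 fun p => f (r - ∑ k, p.2 k - p.1),
    setIntegral_solidSimplex_succ m r 0 fun p => f p.1,
    setIntegral_solidSimplexSplit_eq_setIntegral_intervalIntegral (by fun_prop),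
    setIntegral_solidSimplexSplit_eq_setIntegral_intervalIntegral (by fun_prop)]
  simp [intervalIntegral.integral_comp_sub_left f]

end SolidSimplex

section SimplexIntegral

def simplexPoint (n : ℕ) (y : Fin (n - 1) → ℝ) : Fin n → ℝ :=
  fun i => if h : (i : ℕ) < n - 1 then y ⟨i, h⟩ else 1 - ∑ j, y j

variable {n : ℕ}

lemma simplexIntegral_eq (f : (Fin n → ℝ) → ℝ) :
    simplexIntegral n f
      = (n - 1).factorial * ∫ y in solidSimplex (n - 1) 1, f (simplexPoint n y) := rfl

lemma simplexIntegral_succ (m : ℕ) (f : (Fin (m + 1) → ℝ) → ℝ) :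
    simplexIntegral (m + 1) f
      = m.factorial * ∫ y in solidSimplex m 1, f (simplexPoint (m + 1) y) := rfl

lemma continuous_simplexPoint : Continuous (simplexPoint n) :=
  continuous_pi fun i => by unfold simplexPoint; split <;> fun_prop

lemma simplexPoint_nonneg {y : Fin (n - 1) → ℝ} (hy : y ∈ solidSimplex (n - 1) 1) (i : Fin n) :
    0 ≤ simplexPoint n y i := by
  unfold simplexPoint
  split
  · exact hy.1 _
  · linarith [hy.2]

lemma integrableOn_comp_simplexPoint {f : (Fin n → ℝ) → ℝ} (hf : Continuous f) :
    IntegrableOn (fun y => f (simplexPoint n y)) (solidSimplex (n - 1) 1) :=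
  (hf.comp continuous_simplexPoint).continuousOn.integrableOn_compact (isCompact_solidSimplex _ _)

lemma simplexIntegral_mono {f g : (Fin n → ℝ) → ℝ} (hf : Continuous f) (hg : Continuous g)
    (hfg : ∀ x, (∀ i, 0 ≤ x i) → f x ≤ g x) : simplexIntegral n f ≤ simplexIntegral n g := by
  rw [simplexIntegral_eq, simplexIntegral_eq]
  refine mul_le_mul_of_nonneg_left ?_ (Nat.cast_nonneg _)
  exact setIntegral_mono_on (integrableOn_comp_simplexPoint hf) (integrableOn_comp_simplexPoint hg)
    (measurableSet_solidSimplex _ _) fun y hy => hfg _ (simplexPoint_nonneg hy)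

lemma simplexIntegral_add {f g : (Fin n → ℝ) → ℝ} (hf : Continuous f) (hg : Continuous g) :
    simplexIntegral n (fun x => f x + g x) = simplexIntegral n f + simplexIntegral n g := by
  simp only [simplexIntegral_eq, ← mul_add,
    integral_add (integrableOn_comp_simplexPoint hf) (integrableOn_comp_simplexPoint hg)]

lemma simplexIntegral_const_mul (c : ℝ) (f : (Fin n → ℝ) → ℝ) :
    simplexIntegral n (fun x => c * f x) = c * simplexIntegral n f := by
  simp only [simplexIntegral_eq, MeasureTheory.integral_const_mul]
  ring

lemma simplexIntegral_finsetSum {ι : Type*} (s : Finset ι) {f : ι → (Fin n → ℝ) → ℝ}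
    (hf : ∀ i ∈ s, Continuous (f i)) :
    simplexIntegral n (fun x => ∑ i ∈ s, f i x) = ∑ i ∈ s, simplexIntegral n (f i) := by
  simp only [simplexIntegral_eq, ← Finset.mul_sum,
    integral_finsetSum s fun i hi => integrableOn_comp_simplexPoint (hf i hi)]

lemma simplexIntegral_one (f : (Fin 1 → ℝ) → ℝ) : simplexIntegral 1 f = f 1 := by
  have hpoint : ∀ y, simplexPoint 1 y = 1 := fun y => funext fun i => by simp [simplexPoint]
  have huniv : solidSimplex 0 1 = Set.univ := by ext y; simp [solidSimplex]
  simp [simplexIntegral_eq, hpoint, huniv, measureReal_def, volume_pi]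

lemma simplexIntegral_comp_apply (k : ℕ) (i : Fin (k + 2)) {f : ℝ → ℝ} (hf : Continuous f) :
    simplexIntegral (k + 2) (fun x => f (x i))
      = (k + 1) * ∫ t in (0 : ℝ)..1, f t * (1 - t) ^ k := by
  have hmarginal : ∫ y in solidSimplex (k + 1) 1, f (simplexPoint (k + 2) y i)
      = ∫ t in (0 : ℝ)..1, f t * ((1 - t) ^ k / k.factorial) := by
    by_cases hi : (i : ℕ) < k + 1
    · have hpoint : ∀ y : Fin (k + 1) → ℝ, simplexPoint (k + 2) y i = y ⟨i, hi⟩ :=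
        fun _ => dif_pos hi
      simp_rw [hpoint]
      exact setIntegral_solidSimplex_comp_apply zero_le_one _ hf
    · have hpoint : ∀ y : Fin (k + 1) → ℝ, simplexPoint (k + 2) y i = 1 - ∑ j, y j :=
        fun _ => dif_neg hi
      simp_rw [hpoint]
      rw [setIntegral_solidSimplex_comp_sub_sum hf]
      exact setIntegral_solidSimplex_comp_apply zero_le_one _ hf
  rw [simplexIntegral_succ, hmarginal]
  simp_rw [← mul_div_assoc]
  rw [intervalIntegral.integral_div, Nat.factorial_succ]
  push_cast
  field_simp

end SimplexIntegral

lemma harmC_eq_harmonic_sub_one {n : ℕ} (hn : n ≠ 0) : harmC n = harmonic n - 1 := by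
  rw [harmC, harmonic_eq_sum_Icc,
    ← Finset.insert_Icc_add_one_left_eq_Icc (Nat.one_le_iff_ne_zero.2 hn),
    Finset.sum_insert (by simp)]
  push_cast
  norm_num [one_div]

lemma natCast_mul_simplexIntegral_apply {n : ℕ} (hn : n ≠ 0) (i : Fin n) :
    n * simplexIntegral n (fun x => x i) = 1 := by
  obtain _ | _ | k := n
  · exact absurd rfl hn
  · simp [simplexIntegral_one]
  · rw [simplexIntegral_comp_apply k i (f := fun t => t) continuous_id, integral_mul_one_sub_pow]
    push_cast
    field_simp
    ring

lemma natCast_mul_simplexIntegral_negMulLog_apply {n : ℕ} (hn : n ≠ 0) (i : Fin n) :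
    n * simplexIntegral n (fun x => negMulLog (x i)) = harmC n := by
  obtain _ | _ | k := n
  · exact absurd rfl hn
  · simp [simplexIntegral_one, harmC]
  · rw [simplexIntegral_comp_apply k i continuous_negMulLog,
      integral_negMulLog_mul_one_sub_pow, harmC_eq_harmonic_sub_one hn, harmonic_succ (k + 1)]
    push_cast
    field_simp
    ring

lemma subF_le_sum_negMulLog {n : ℕ} (lam : Fin n → ℝ) (h0 : ∀ i, 0 ≤ lam i)
    (h1 : ∑ i, lam i = 1) : subF n lam ≤ ∑ i, negMulLog (lam i) := by
  have hn : n ≠ 0 := by rintro rfl; simp at h1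
  have hpoint : ∀ x : Fin n → ℝ, (∀ i, 0 ≤ x i) → negMulLog (∑ i, lam i * x i)
      ≤ ∑ i, (negMulLog (lam i) * x i + lam i * negMulLog (x i)) := fun x hx =>
    (negMulLog_sum_le _ fun i _ => mul_nonneg (h0 i) (hx i)).trans_eq
      (Finset.sum_congr rfl fun i _ => by rw [negMulLog_mul]; ring)
  calc subF n lam = n * simplexIntegral n (fun x => negMulLog (∑ i, lam i * x i)) - harmC n := by
        rw [subF, eta_eq_negMulLog]
    _ ≤ n * simplexIntegral n
          (fun x => ∑ i, (negMulLog (lam i) * x i + lam i * negMulLog (x i))) - harmC n := by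
        gcongr
        exact simplexIntegral_mono (by fun_prop) (by fun_prop) hpoint
    _ = ∑ i, (negMulLog (lam i) * (n * simplexIntegral n (fun x => x i))
          + lam i * (n * simplexIntegral n (fun x => negMulLog (x i)))) - harmC n := by
        rw [simplexIntegral_finsetSum _ fun i _ => by fun_prop, Finset.mul_sum]
        congr 1
        refine Finset.sum_congr rfl fun i _ => ?_
        rw [simplexIntegral_add (by fun_prop) (by fun_prop), simplexIntegral_const_mul,
          simplexIntegral_const_mul]
        ring
    _ = ∑ i, negMulLog (lam i) := by
        simp only [natCast_mul_simplexIntegral_apply hn,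
          natCast_mul_simplexIntegral_negMulLog_apply hn, mul_one, Finset.sum_add_distrib,
          ← Finset.sum_mul, h1]
        ring

/-- subentropy is at most the von Neumann entropy, Q(ρ) ≤ S(ρ). -/
theorem subentropy_le_vonNeumann_entropy (n : ℕ) (ρ : Matrix (Fin n) (Fin n) ℂ)
    (hρ : ρ.PosSemidef) (ht : ρ.trace = 1) :
    Qmat ρ ≤ ∑ i, eta (hρ.isHermitian.eigenvalues i) := by
  set e := Fintype.equivFin (Fin n)
  have hsum : ∑ i, hρ.isHermitian.eigenvalues i = 1 := by
    have h := hρ.isHermitian.trace_eq_sum_eigenvalues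
    rw [ht] at h
    simpa using congrArg RCLike.re h.symm
  rw [Qmat, dif_pos hρ.isHermitian, eta_eq_negMulLog,
    ← e.symm.sum_comp fun i => negMulLog (hρ.isHermitian.eigenvalues i)]
  refine subF_le_sum_negMulLog _ (fun k => hρ.eigenvalues_nonneg _) ?_
  rwa [e.symm.sum_comp fun i => hρ.isHermitian.eigenvalues i]
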